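/- The element i is not a norm from ℚ(i, √5) to ℚ(i); that is, there is no z ∈ ℚ(i, √5) such that z·σ(z) = i, where σ is the nontrivial ℚ(i)-automorphism sending √5 to -√5. -/

import Mathlib

open IntermediateField

noncomputable def Fi : IntermediateField ℚ ℂ := ℚ⟮Complex.I⟯

noncomputable def Ki : IntermediateField (↥Fi) ℂ :=
  IntermediateField.adjoin (↥Fi) {((Real.sqrt 5 : ℝ) : ℂ)}

open Complex Polynomial Zsqrtd


open Zsqrtd

noncomputable def f : GaussianInt →+* ZMod 5 :=
  Zsqrtd.lift ⟨3, by decide⟩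

lemma f_apply (x : GaussianInt) : f x = (x.re : ZMod 5) + (x.im : ZMod 5) * 3 := by
  simp [f]

def pi5 : GaussianInt := ⟨2, 1⟩

lemma pi5_dvd_iff (x : GaussianInt) : pi5 ∣ x ↔ f x = 0 := by
  constructor
  · rintro ⟨c, rfl⟩
    have : f pi5 = 0 := by rw [f_apply]; decide
    rw [map_mul, this, zero_mul]
  · intro h
    rw [f_apply] at h
    have h5 : (5 : ℤ) ∣ (x.re + 3 * x.im) := by
      have := (ZMod.intCast_zmod_eq_zero_iff_dvd (x.re + 3 * x.im) 5).mp (by push_cast; linear_combination h)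
      exact_mod_cast this
    obtain ⟨k, hk⟩ := h5
    refine ⟨⟨2 * k - x.im, x.im - k⟩, ?_⟩
    have hre : x.re = 5 * k - 3 * x.im := by linarith
    ext <;> simp [pi5, Zsqrtd.re_mul, Zsqrtd.im_mul] <;> linarith

instance : Fact (Nat.Prime 5) := ⟨by norm_num⟩

lemma zmod5_sq : ∀ x y : ZMod 5, x^2 = 3 * y^2 → x = 0 ∧ y = 0 := by decide

lemma pi5_mul_conj : pi5 * ⟨2, -1⟩ = (5 : GaussianInt) := by decide

lemma descent : ∀ n : ℕ, ∀ A B D : GaussianInt, D ≠ 0 → D.norm.natAbs = n →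
    A^2 - 5*B^2 = ⟨0,1⟩ * D^2 → False := by
  intro n
  induction n using Nat.strong_induction_on with
  | _ n ih =>
    intro A B D hD hn hEq
    have hfi : f ⟨0,1⟩ = 3 := by rw [f_apply]; decide
    have h1 : (f A)^2 = 3 * (f D)^2 := by
      have := congrArg f hEq
      simp only [map_sub, map_mul, map_pow, map_ofNat, hfi] at this
      have h5 : f (5 : GaussianInt) = 0 := by rw [f_apply]; decide
      have h50 : (5 : ZMod 5) = 0 := rfl
      linear_combination this + (f B)^2 * h50
    obtain ⟨hA0, hD0⟩ := zmod5_sq _ _ h1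
    obtain ⟨A₁, rfl⟩ := (pi5_dvd_iff A).mpr hA0
    obtain ⟨D₁, rfl⟩ := (pi5_dvd_iff D).mpr hD0
    -- 5 B² = π² (A₁² - i D₁²) ;  π π̄ B² = π² C ⇒ π̄ B² = π C
    have hpi_ne : pi5 ≠ 0 := by decide
    have hC : (⟨2,-1⟩ : GaussianInt) * B^2 = pi5 * (A₁^2 - ⟨0,1⟩ * D₁^2) := by
      have h2 : pi5 * ((⟨2,-1⟩ : GaussianInt) * B^2) = pi5 * (pi5 * (A₁^2 - ⟨0,1⟩*D₁^2)) := by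
        have := pi5_mul_conj
        linear_combination B^2 * this - hEq
      exact mul_left_cancel₀ hpi_ne h2
    have hB0 : f B = 0 := by
      have := congrArg f hC
      simp only [map_mul, map_pow, map_sub] at this
      have hfp : f pi5 = 0 := by rw [f_apply]; decide
      have hfc : f (⟨2,-1⟩ : GaussianInt) = -1 := by rw [f_apply]; decide
      rw [hfp, hfc, zero_mul] at this
      have : (f B)^2 = 0 := by linear_combination -this
      exact pow_eq_zero_iff (by norm_num) |>.mp this
    obtain ⟨B₁, rfl⟩ := (pi5_dvd_iff B).mpr hB0
    have hEq' : A₁^2 - 5*B₁^2 = ⟨0,1⟩ * D₁^2 := by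
      have h2 : pi5^2 * (A₁^2 - 5*B₁^2) = pi5^2 * (⟨0,1⟩ * D₁^2) := by
        linear_combination hEq
      exact mul_left_cancel₀ (pow_ne_zero 2 hpi_ne) h2
    have hD₁ : D₁ ≠ 0 := fun h => hD (by rw [h, mul_zero])
    have hnorm : (pi5 * D₁).norm.natAbs = 5 * D₁.norm.natAbs := by
      rw [Zsqrtd.norm_mul]
      have : pi5.norm = 5 := by decide
      rw [this, Int.natAbs_mul]
      norm_num
    have hlt : D₁.norm.natAbs < n := by
      rw [← hn, hnorm]
      have h1 : 1 ≤ D₁.norm.natAbs := by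
        rcases Nat.eq_zero_or_pos D₁.norm.natAbs with h | h
        · exact absurd ((Zsqrtd.norm_eq_zero_iff (by norm_num : (-1:ℤ) < 0) D₁).mp (Int.natAbs_eq_zero.mp h)) hD₁
        · exact h
      omega
    exact ih _ hlt A₁ B₁ D₁ hD₁ rfl hEq'

lemma rat_no_sol (p q r s : ℚ) (h1 : p^2 - q^2 - 5*(r^2-s^2) = 0)
    (h2 : 2*p*q - 10*r*s = 1) : False := by
  set d : ℤ := (p.den : ℤ) * q.den * r.den * s.den with hd
  have hd0 : (0:ℤ) < d := by
    have := p.den_pos; have := q.den_pos; have := r.den_pos; have := s.den_pos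
    rw [hd]; positivity
  set P : ℤ := p.num * ((q.den : ℤ) * r.den * s.den) with hPdef
  set Q : ℤ := q.num * ((p.den : ℤ) * r.den * s.den) with hQdef
  set R : ℤ := r.num * ((p.den : ℤ) * q.den * s.den) with hRdef
  set S : ℤ := s.num * ((p.den : ℤ) * q.den * r.den) with hSdef
  have hnum : ∀ t : ℚ, (t.num : ℚ) = t * t.den := fun t => by
    have hden : (t.den : ℚ) ≠ 0 := by exact_mod_cast t.den_pos.ne'
    have h := Rat.num_div_den t
    rw [div_eq_iff hden] at h
    exact h
  have hP : (P : ℚ) = p * d := by push_cast [hPdef, hd, hnum p]; ring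
  have hQ : (Q : ℚ) = q * d := by push_cast [hQdef, hd, hnum q]; ring
  have hR : (R : ℚ) = r * d := by push_cast [hRdef, hd, hnum r]; ring
  have hS : (S : ℚ) = s * d := by push_cast [hSdef, hd, hnum s]; ring
  have hi1 : P^2 - Q^2 - 5*(R^2 - S^2) = 0 := by
    have : ((P^2 - Q^2 - 5*(R^2 - S^2) : ℤ) : ℚ) = 0 := by
      push_cast [hP, hQ, hR, hS]
      linear_combination (d:ℚ)^2 * h1
    exact_mod_cast this
  have hi2 : 2*P*Q - 10*R*S = d^2 := by
    have : ((2*P*Q - 10*R*S : ℤ) : ℚ) = ((d^2 : ℤ) : ℚ) := by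
      push_cast [hP, hQ, hR, hS]
      linear_combination (d:ℚ)^2 * h2
    exact_mod_cast this
  refine descent (Zsqrtd.norm (⟨d,0⟩ : GaussianInt)).natAbs ⟨P,Q⟩ ⟨R,S⟩ ⟨d,0⟩ ?_ rfl ?_
  · intro h
    exact absurd (congrArg Zsqrtd.re h) (by simpa using hd0.ne')
  · ext <;> simp [pow_two, Zsqrtd.re_mul, Zsqrtd.im_mul] <;> linarith

open Complex in
lemma complex_no_sol (p q r s : ℚ)
    (h : ((p:ℂ) + q*I)^2 - 5*((r:ℂ)+s*I)^2 = I) : False := by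
  rw [Complex.ext_iff] at h
  obtain ⟨h1, h2⟩ := h
  simp [pow_two, Complex.add_re, Complex.add_im, Complex.mul_re, Complex.mul_im,
    Complex.sub_re, Complex.sub_im] at h1 h2
  apply rat_no_sol p q r s
  · exact_mod_cast (by linarith : (p:ℝ)^2 - q^2 - 5*((r:ℝ)^2-s^2) = 0)
  · have : 2*(p:ℝ)*q - 10*((r:ℝ)*s) = 1 := by linarith
    have h' : 2*p*q - 10*(r*s) = 1 := by exact_mod_cast this
    linarith



noncomputable def S5 : IntermediateField ℚ ℂ where
  carrier := {z | ∃ p q : ℚ, z = p + q * I}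
  add_mem' := by
    rintro x y ⟨p, q, rfl⟩ ⟨p', q', rfl⟩
    exact ⟨p + p', q + q', by push_cast; ring⟩
  mul_mem' := by
    rintro x y ⟨p, q, rfl⟩ ⟨p', q', rfl⟩
    refine ⟨p*p' - q*q', p*q' + q*p', ?_⟩
    have := Complex.I_sq
    push_cast
    linear_combination (q : ℂ) * q' * this
  algebraMap_mem' := fun r => ⟨r, 0, by simp⟩
  inv_mem' := by
    rintro x ⟨p, q, rfl⟩
    by_cases hx : (p : ℂ) + q * I = 0
    · rw [hx, inv_zero]; exact ⟨0, 0, by simp⟩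
    · have hn : p^2 + q^2 ≠ 0 := by
        intro h
        have hp : p = 0 ∧ q = 0 := by
          constructor <;> nlinarith [sq_nonneg p, sq_nonneg q]
        apply hx
        rw [hp.1, hp.2]; simp
      refine ⟨p / (p^2+q^2), -(q / (p^2+q^2)), ?_⟩
      apply inv_eq_of_mul_eq_one_right
      have := Complex.I_sq
      have hnc : ((p:ℂ)^2 + q^2) ≠ 0 := by exact_mod_cast hn
      push_cast
      field_simp
      ring_nf
      linear_combination (-(q:ℂ)^2) * this

lemma mem_S5 {z : ℂ} (hz : z ∈ Fi) : ∃ p q : ℚ, z = p + q * I := by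
  have hle : Fi ≤ S5 := by
    rw [Fi, adjoin_simple_le_iff]
    exact ⟨0, 1, by simp⟩
  exact hle hz

lemma sqrt5_not_mem : ((Real.sqrt 5 : ℝ) : ℂ) ∉ Fi := by
  intro h
  obtain ⟨p, q, hpq⟩ := mem_S5 h
  have him := congrArg Complex.im hpq
  simp at him
  have hq : (q:ℝ) = 0 := him.symm
  have hre := congrArg Complex.re hpq
  simp [hq] at hre
  have hirr : Irrational (Real.sqrt 5) := by
    have := Nat.Prime.irrational_sqrt (p := 5) (by norm_num)
    simpa using this
  exact hirr ⟨p, hre.symm⟩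





noncomputable abbrev s5 : ℂ := ((Real.sqrt 5 : ℝ) : ℂ)

set_option maxHeartbeats 1000000
set_option synthInstance.maxHeartbeats 400000

lemma s5_sq : s5 * s5 = 5 := by
  rw [show s5 * s5 = ((Real.sqrt 5 * Real.sqrt 5 : ℝ) : ℂ) by push_cast; ring,
    Real.mul_self_sqrt (by norm_num : (0:ℝ) ≤ 5)]
  norm_num

lemma s5_int : IsIntegral (↥Fi) s5 := by
  refine ⟨X^2 - C 5, monic_X_pow_sub_C _ (by norm_num), ?_⟩
  have h5 : s5^2 = 5 := by rw [pow_two, s5_sq]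
  rw [eval₂_sub, eval₂_pow, eval₂_X, eval₂_C, h5, map_ofNat]
  ring

lemma irr5 : Irreducible (X^2 - C (5 : ↥Fi)) := by
  apply X_pow_sub_C_irreducible_of_prime Nat.prime_two
  intro b hb
  apply sqrt5_not_mem
  have c5 : ((5 : ↥Fi) : ℂ) = 5 := rfl
  have hb' : (b:ℂ)^2 = 5 := by
    have h := congrArg (Subtype.val) hb
    rw [show (Subtype.val (b^2) : ℂ) = (b:ℂ)^2 from rfl] at h
    rw [h]; exact c5
  have : ((b:ℂ) - s5) * ((b:ℂ) + s5) = 0 := by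
    have h := s5_sq
    linear_combination hb' - h
  rcases mul_eq_zero.mp this with h | h
  · have h2 : ((Real.sqrt 5:ℝ):ℂ) = (b:ℂ) := by linear_combination -h
    rw [h2]; exact b.2
  · have h2 : ((Real.sqrt 5:ℝ):ℂ) = ((-b : ↥Fi):ℂ) := by push_cast; linear_combination h
    rw [h2]; exact (-b).2

lemma s5_minpoly : minpoly (↥Fi) s5 = X^2 - C 5 := by
  refine (minpoly.eq_of_irreducible_of_monic irr5 ?_ (monic_X_pow_sub_C _ (by norm_num))).symm
  simp only [map_sub, map_pow, aeval_X, aeval_C, map_ofNat]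
  rw [pow_two, s5_sq]
  ring

noncomputable def pb : PowerBasis (↥Fi) (↥Ki) := adjoin.powerBasis s5_int

lemma pb_dim : pb.dim = 2 := by
  show (minpoly (↥Fi) s5).natDegree = 2
  rw [s5_minpoly]
  compute_degree!

noncomputable def B : Module.Basis (Fin 2) (↥Fi) (↥Ki) := pb.basis.reindex (finCongr pb_dim)

lemma B_zero : B 0 = 1 := by
  rw [B, Module.Basis.reindex_apply, PowerBasis.basis_eq_pow]
  simp

lemma B_one : B 1 = pb.gen := by
  rw [B, Module.Basis.reindex_apply, PowerBasis.basis_eq_pow]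
  simp

lemma gen_sq : pb.gen * pb.gen = (5 : ↥Ki) := by
  apply Subtype.ext
  push_cast [pb, adjoin.powerBasis]
  exact s5_sq

lemma norm_form (z : ↥Ki) : ∃ a b : ↥Fi, Algebra.norm (↥Fi) z = a^2 - 5*b^2 := by
  classical
  set a := B.repr z 0 with ha
  set b := B.repr z 1 with hb
  refine ⟨a, b, ?_⟩
  have hz : z = a • B 0 + b • B 1 := by
    conv_lhs => rw [← B.sum_repr z]
    rw [Fin.sum_univ_two]
  have hfive : (5 : ↥Ki) = (5 : ↥Fi) • (1 : ↥Ki) := by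
    rw [← Algebra.algebraMap_eq_smul_one, map_ofNat]
  have hzg : z * B 1 = (5*b) • B 0 + a • B 1 := by
    conv_lhs => rw [hz]
    rw [add_mul, smul_mul_assoc, smul_mul_assoc, B_zero, B_one, one_mul, gen_sq,
      hfive, smul_smul, ← B_zero, ← B_one, mul_comm b]
    ring_nf
  have hz0 : z * B 0 = a • B 0 + b • B 1 := by
    conv_lhs => rw [B_zero, mul_one]
    exact hz
  have hrepr : ∀ (x y : ↥Fi) (j : Fin 2), B.repr (x • B 0 + y • B 1) j
      = if j = 0 then x else y := by
    intro x y j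
    rw [map_add, map_smul, map_smul, B.repr_self, B.repr_self]
    fin_cases j <;> simp
  rw [Algebra.norm_eq_matrix_det B z, Matrix.det_fin_two]
  rw [Algebra.leftMulMatrix_eq_repr_mul, Algebra.leftMulMatrix_eq_repr_mul,
    Algebra.leftMulMatrix_eq_repr_mul, Algebra.leftMulMatrix_eq_repr_mul,
    hz0, hzg, hrepr, hrepr, hrepr, hrepr]
  simp
  ring


/-- i is not a norm from ℚ(i,√5) to ℚ(i). -/
theorem stmt3 :
    ¬ ∃ z : ↥Ki,
      Algebra.norm (↥Fi) z
        = ⟨Complex.I, IntermediateField.mem_adjoin_simple_self ℚ Complex.I⟩ := by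
  rintro ⟨z, hz⟩
  obtain ⟨a, b, hn⟩ := norm_form z
  rw [hn] at hz
  have h : ((a:ℂ))^2 - 5*(b:ℂ)^2 = Complex.I := by
    have h2 := congrArg Subtype.val hz
    push_cast at h2
    exact_mod_cast h2
  obtain ⟨p, q, ha2⟩ := mem_S5 a.2
  obtain ⟨r, s, hb2⟩ := mem_S5 b.2
  exact complex_no_sol p q r s (by rw [← ha2, ← hb2]; exact h)
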